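/- Let R be a unital ring, n ≥ 2, and M a 2-torsion free Mₙ(R)-bimodule (not necessarily unital). Then every Jordan derivation D : Mₙ(R) → M is a derivation. -/

import Mathlib

/-!
Write `δ(a, b) = D(ab) - D(a)b - aD(b)`. As `M` need not be unital, first split off the corner
`1·M·1`: with `x = D 1` one has `a·x·b = 0` and `D a = 1·D(a)·1 + a·x + x·a`, and `a ↦ a·x + x·a`
has zero defect, so we may assume that `1` acts as the identity on the values of `D`.
Subtracting the inner derivation of `∑ₚ D(eₚₚ)·eₚₚ` then makes `D` vanish on the diagonal
matrix units, after which Herstein's identities for `D(aba)` and `D(abc + cba)` place `D(eᵢⱼ x)`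
in `eᵢᵢ·M·eⱼⱼ` and give `δ = 0` on pairs of matrix units, case by case. The case
`δ(eᵢᵢ x, eᵢᵢ y)` reduces through `eᵢᵢ y = eᵢⱼ y · eⱼᵢ` to the others, which is where a second
index `j ≠ i`, i.e. `n ≥ 2`, is needed. Biadditivity of `δ` finishes.
-/

/-- A (not necessarily unital) bimodule structure of a ring `A` on an
additive group `M`, given by a left action `l` and a right action `r`. -/
structure RingBimod (A M : Type*) [Ring A] [AddCommGroup M] where
  l : A → M → M
  r : M → A → M
  l_add : ∀ a m₁ m₂, l a (m₁ + m₂) = l a m₁ + l a m₂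
  add_l : ∀ a₁ a₂ m, l (a₁ + a₂) m = l a₁ m + l a₂ m
  r_add : ∀ m₁ m₂ a, r (m₁ + m₂) a = r m₁ a + r m₂ a
  add_r : ∀ m a₁ a₂, r m (a₁ + a₂) = r m a₁ + r m a₂
  mul_l : ∀ a₁ a₂ m, l (a₁ * a₂) m = l a₁ (l a₂ m)
  r_mul : ∀ m a₁ a₂, r m (a₁ * a₂) = r (r m a₁) a₂
  l_r : ∀ a₁ m a₂, l a₁ (r m a₂) = r (l a₁ m) a₂

lemma eq_of_add_self_eq_add_self {M : Type*} [AddCommGroup M] (htf : ∀ m : M, m + m = 0 → m = 0)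
    {m m' : M} (h : m + m = m' + m') : m = m' :=
  sub_eq_zero.mp (htf _ (by rw [sub_add_sub_comm, h, sub_self]))

namespace RingBimod

variable {A M : Type*} [Ring A] [AddCommGroup M] (bm : RingBimod A M)

def lHom : A →+ M →+ M :=
  AddMonoidHom.mk' (fun a => AddMonoidHom.mk' (bm.l a) (bm.l_add a))
    fun a₁ a₂ => AddMonoidHom.ext (bm.add_l a₁ a₂)

def rHom : M →+ A →+ M :=
  AddMonoidHom.mk' (fun m => AddMonoidHom.mk' (bm.r m) (bm.add_r m))
    fun m₁ m₂ => AddMonoidHom.ext (bm.r_add m₁ m₂)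

@[simp] lemma lHom_apply (a : A) (m : M) : bm.lHom a m = bm.l a m := rfl

@[simp] lemma rHom_apply (m : M) (a : A) : bm.rHom m a = bm.r m a := rfl

@[simp] lemma l_zero (a : A) : bm.l a 0 = 0 := (bm.lHom a).map_zero

@[simp] lemma zero_l (m : M) : bm.l 0 m = 0 := DFunLike.congr_fun bm.lHom.map_zero m

@[simp] lemma r_zero (a : A) : bm.r 0 a = 0 := DFunLike.congr_fun bm.rHom.map_zero a

@[simp] lemma zero_r (m : M) : bm.r m 0 = 0 := (bm.rHom m).map_zero

lemma l_sub (a : A) (m₁ m₂ : M) : bm.l a (m₁ - m₂) = bm.l a m₁ - bm.l a m₂ :=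
  (bm.lHom a).map_sub m₁ m₂

lemma r_sub (m₁ m₂ : M) (a : A) : bm.r (m₁ - m₂) a = bm.r m₁ a - bm.r m₂ a :=
  DFunLike.congr_fun (bm.rHom.map_sub m₁ m₂) a

lemma l_sum {ι : Type*} (s : Finset ι) (a : A) (g : ι → M) :
    bm.l a (∑ i ∈ s, g i) = ∑ i ∈ s, bm.l a (g i) :=
  map_sum (bm.lHom a) g s

lemma r_sum {ι : Type*} (s : Finset ι) (g : ι → M) (a : A) :
    bm.r (∑ i ∈ s, g i) a = ∑ i ∈ s, bm.r (g i) a := by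
  rw [← rHom_apply, map_sum, AddMonoidHom.finsetSum_apply]
  rfl

lemma sum_l {ι : Type*} (s : Finset ι) (g : ι → A) (m : M) :
    bm.l (∑ i ∈ s, g i) m = ∑ i ∈ s, bm.l (g i) m := by
  rw [← lHom_apply, map_sum, AddMonoidHom.finsetSum_apply]
  rfl

lemma sum_r {ι : Type*} (s : Finset ι) (m : M) (g : ι → A) :
    bm.r m (∑ i ∈ s, g i) = ∑ i ∈ s, bm.r m (g i) :=
  map_sum (bm.rHom m) g s

structure IsJordanDerivation (D : A → M) : Prop where
  map_add : ∀ a b, D (a + b) = D a + D b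
  map_jordan : ∀ a b,
    D (a * b + b * a) = bm.r (D a) b + bm.l a (D b) + bm.r (D b) a + bm.l b (D a)

def derivDefect (D : A → M) (a b : A) : M := D (a * b) - bm.r (D a) b - bm.l a (D b)

def innerDer (m : M) (a : A) : M := bm.l a m - bm.r m a

def corner (m : M) : M := bm.r (bm.l 1 m) 1

variable {bm}

lemma derivDefect_add (D₁ D₂ : A → M) (a b : A) :
    bm.derivDefect (D₁ + D₂) a b = bm.derivDefect D₁ a b + bm.derivDefect D₂ a b := by
  simp only [derivDefect, Pi.add_apply, bm.r_add, bm.l_add]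
  abel

lemma derivDefect_innerDer (m : M) (a b : A) : bm.derivDefect (bm.innerDer m) a b = 0 := by
  simp only [derivDefect, innerDer, l_sub, r_sub, ← bm.mul_l, ← bm.r_mul, bm.l_r]
  abel

lemma derivDefect_add_left {D : A → M} (hadd : ∀ a b, D (a + b) = D a + D b) (a₁ a₂ b : A) :
    bm.derivDefect D (a₁ + a₂) b = bm.derivDefect D a₁ b + bm.derivDefect D a₂ b := by
  simp only [derivDefect, add_mul, hadd, bm.r_add, bm.add_l]
  abel

lemma derivDefect_add_right {D : A → M} (hadd : ∀ a b, D (a + b) = D a + D b) (a b₁ b₂ : A) :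
    bm.derivDefect D a (b₁ + b₂) = bm.derivDefect D a b₁ + bm.derivDefect D a b₂ := by
  simp only [derivDefect, mul_add, hadd, bm.add_r, bm.l_add]
  abel

lemma corner_add (m₁ m₂ : M) : bm.corner (m₁ + m₂) = bm.corner m₁ + bm.corner m₂ := by
  simp only [corner, bm.l_add, bm.r_add]

lemma corner_l (a : A) (m : M) : bm.corner (bm.l a m) = bm.r (bm.l a m) 1 := by
  rw [corner, ← bm.mul_l, one_mul]

lemma corner_r (m : M) (a : A) : bm.corner (bm.r m a) = bm.r (bm.l 1 m) a := by
  rw [corner, bm.l_r, ← bm.r_mul, mul_one]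

lemma l_corner (a : A) (m : M) : bm.l a (bm.corner m) = bm.r (bm.l a m) 1 := by
  rw [corner, bm.l_r, ← bm.mul_l, mul_one]

lemma r_corner (m : M) (a : A) : bm.r (bm.corner m) a = bm.r (bm.l 1 m) a := by
  rw [corner, ← bm.r_mul, one_mul]

lemma l_one_of_corner_eq {m : M} (h : bm.corner m = m) : bm.l 1 m = m := by
  conv_lhs => rw [← h]
  exact (l_corner 1 m).trans h

lemma r_one_of_corner_eq {m : M} (h : bm.corner m = m) : bm.r m 1 = m := by
  conv_lhs => rw [← h]
  exact (r_corner m 1).trans h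

lemma corner_corner (m : M) : bm.corner (bm.corner m) = bm.corner m := by
  rw [corner, l_corner, ← bm.r_mul, mul_one, corner]

lemma corner_innerDer {m : M} (hm : bm.corner m = m) (a : A) :
    bm.corner (bm.innerDer m a) = bm.innerDer m a := by
  simp only [innerDer, corner, l_sub, r_sub, bm.l_r, ← bm.mul_l, ← bm.r_mul, one_mul, mul_one]
  rw [← r_corner, hm, ← bm.l_r, r_one_of_corner_eq hm]

namespace IsJordanDerivation

variable {D : A → M}

lemma map_zero (hD : bm.IsJordanDerivation D) : D 0 = 0 := by
  simpa using hD.map_add 0 0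

lemma add_innerDer (hD : bm.IsJordanDerivation D) (m : M) :
    bm.IsJordanDerivation (D + bm.innerDer m) where
  map_add a b := by
    simp only [Pi.add_apply, innerDer, hD.map_add, bm.add_l, bm.add_r]
    abel
  map_jordan a b := by
    simp only [Pi.add_apply, innerDer, hD.map_jordan, l_sub, r_sub, bm.l_add, bm.r_add, bm.add_l,
      bm.add_r, ← bm.mul_l, ← bm.r_mul, bm.l_r]
    abel

lemma comp_corner (hD : bm.IsJordanDerivation D) : bm.IsJordanDerivation (bm.corner ∘ D) where
  map_add a b := by simp only [Function.comp_apply, hD.map_add, corner_add]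
  map_jordan a b := by
    simp only [Function.comp_apply, hD.map_jordan, corner_add, corner_l, corner_r, l_corner,
      r_corner]

lemma sandwich_map_orthogonal (hD : bm.IsJordanDerivation D) {e f : A} (he : e * e = e)
    (hf : f * f = f) (hef : e * f = 0) (hfe : f * e = 0) :
    bm.r (bm.l f (D e)) e + bm.r (bm.l f (D f)) e = 0 := by
  have h := congrArg (fun m => bm.r (bm.l f m) e) (hD.map_jordan e f)
  simp only [hef, hfe, add_zero, hD.map_zero, l_zero, r_zero, bm.l_add, bm.r_add, bm.l_r,
    ← bm.mul_l, ← bm.r_mul, he, hf, zero_l, zero_r, zero_add] at h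
  rw [h, add_comm]

variable (htf : ∀ m : M, m + m = 0 → m = 0)
include htf

lemma map_mul_self (hD : bm.IsJordanDerivation D) (a : A) :
    D (a * a) = bm.r (D a) a + bm.l a (D a) := by
  apply eq_of_add_self_eq_add_self htf
  rw [← hD.map_add, hD.map_jordan]
  abel

lemma map_mul_mul_self (hD : bm.IsJordanDerivation D) (a b : A) :
    D (a * b * a) = bm.r (D a) (b * a) + bm.r (bm.l a (D b)) a + bm.l (a * b) (D a) := by
  apply eq_of_add_self_eq_add_self htf
  have h := hD.map_jordan a (a * b + b * a)
  rw [show a * (a * b + b * a) + (a * b + b * a) * a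
      = (a * a * b + b * (a * a)) + (a * b * a + a * b * a) by noncomm_ring,
    hD.map_add, hD.map_jordan, hD.map_add, hD.map_jordan, hD.map_mul_self htf] at h
  rw [eq_sub_of_add_eq' h]
  simp only [bm.l_add, bm.add_l, bm.r_add, bm.add_r, bm.l_r, ← bm.mul_l, ← bm.r_mul]
  abel

lemma map_mul_mul_add_mul_mul (hD : bm.IsJordanDerivation D) (a b c : A) :
    D (a * b * c + c * b * a)
      = bm.r (D a) (b * c) + bm.r (bm.l a (D b)) c + bm.l (a * b) (D c)
        + bm.r (D c) (b * a) + bm.r (bm.l c (D b)) a + bm.l (c * b) (D a) := by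
  have h := hD.map_mul_mul_self htf (a + c) b
  rw [show (a + c) * b * (a + c) = (a * b * a + c * b * c) + (a * b * c + c * b * a) by
    noncomm_ring, hD.map_add (a * b * a + c * b * c), hD.map_add (a * b * a),
    hD.map_mul_mul_self htf, hD.map_mul_mul_self htf, hD.map_add a c] at h
  rw [eq_sub_of_add_eq' h]
  simp only [mul_add, add_mul, bm.l_add, bm.add_l, bm.r_add, bm.add_r]
  abel

lemma derivDefect_mul_add (hD : bm.IsJordanDerivation D) (a b c : A) :
    bm.derivDefect D a (b * c) + bm.l a (bm.derivDefect D b c)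
      + bm.derivDefect D (c * b) a + bm.r (bm.derivDefect D c b) a = 0 := by
  have h := hD.map_mul_mul_add_mul_mul htf a b c
  rw [hD.map_add] at h
  simp only [derivDefect, ← mul_assoc]
  rw [eq_sub_of_add_eq h]
  simp only [l_sub, r_sub, bm.l_r, ← bm.mul_l, ← bm.r_mul, mul_assoc]
  abel

-- `D 1 = D 1 * 1 + 1 * D 1` makes `a * D 1 * b` twice itself.
lemma l_r_map_one_eq_zero (hD : bm.IsJordanDerivation D) (a b : A) :
    bm.r (bm.l a (D 1)) b = 0 := by
  have h := congrArg (fun m => bm.r (bm.l a m) b) (hD.map_mul_self htf 1)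
  simp only [mul_one, bm.l_add, bm.r_add, bm.l_r, ← bm.mul_l, ← bm.r_mul, one_mul] at h
  exact left_eq_add.mp h

lemma map_eq_corner_add (hD : bm.IsJordanDerivation D) (a : A) :
    D a = bm.corner (D a) + bm.l a (D 1) + bm.r (D 1) a := by
  have hJ := hD.map_jordan a 1
  rw [mul_one, one_mul, hD.map_add] at hJ
  have hl := congrArg (bm.l 1) hJ
  have hr := congrArg (bm.r · 1) hJ
  simp only [bm.l_add, bm.r_add, bm.l_r, ← bm.mul_l, ← bm.r_mul, one_mul, mul_one,
    hD.l_r_map_one_eq_zero htf] at hl hr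
  have hl' : bm.l 1 (D a) = bm.corner (D a) + bm.l a (D 1) := by
    rw [add_zero] at hl
    exact add_right_cancel hl
  have hr' : bm.r (D a) 1 = bm.corner (D a) + bm.r (D 1) a := by
    rw [add_zero, add_assoc] at hr
    rw [add_left_cancel hr, add_comm, corner]
  apply eq_of_add_self_eq_add_self htf
  rw [hJ, hl', hr']
  abel

lemma derivDefect_eq_derivDefect_corner (hD : bm.IsJordanDerivation D) (a b : A) :
    bm.derivDefect D a b = bm.derivDefect (bm.corner ∘ D) a b := by
  have hsplit : D = bm.corner ∘ D + fun c => bm.l c (D 1) + bm.r (D 1) c :=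
    funext fun c => (hD.map_eq_corner_add htf c).trans (add_assoc _ _ _)
  conv_lhs => rw [hsplit]
  rw [derivDefect_add, add_eq_left]
  simp only [derivDefect, bm.l_add, bm.r_add, bm.l_r, ← bm.mul_l, ← bm.r_mul,
    hD.l_r_map_one_eq_zero htf]
  abel

lemma sandwich_map_idempotent (hD : bm.IsJordanDerivation D) {e : A} (he : e * e = e) :
    bm.r (bm.l e (D e)) e = 0 := by
  have h := congrArg (fun m => bm.r (bm.l e m) e) (hD.map_mul_self htf e)
  simp only [he, bm.l_add, bm.r_add, bm.l_r, ← bm.mul_l, ← bm.r_mul] at h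
  exact left_eq_add.mp h

lemma sandwich_map_eq_zero_of_map_eq_zero (hD : bm.IsJordanDerivation D) {e b : A}
    (hDe : D e = 0) (h : e * b * e = 0) : bm.r (bm.l e (D b)) e = 0 := by
  have := hD.map_mul_mul_self htf e b
  rw [h, hD.map_zero, hDe, r_zero, l_zero, zero_add, add_zero] at this
  exact this.symm

lemma sandwich_map_eq_zero_of_orthogonal (hD : bm.IsJordanDerivation D) {e f b : A}
    (he : e * e = e) (hf : f * f = f) (hef : e * f = 0) (hDe : D e = 0) (hDf : D f = 0)
    (h₁ : e * b * f = 0) (h₂ : f * b * e = 0) : bm.r (bm.l e (D b)) f = 0 := by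
  have h := hD.map_mul_mul_add_mul_mul htf e b f
  rw [h₁, h₂, add_zero, hD.map_zero, hDe, hDf] at h
  have h' := congrArg (fun m => bm.r (bm.l e m) f) h
  simp only [l_zero, r_zero, zero_add, add_zero, bm.l_add, bm.l_r, ← bm.mul_l, ← bm.r_mul, he,
    hf, hef, zero_l] at h'
  exact h'.symm

lemma exists_innerDer_map_idempotent_eq_zero {ι : Type*} [Fintype ι]
    (hD : bm.IsJordanDerivation D) (hD1 : ∀ a, bm.corner (D a) = D a) (e : ι → A)
    (he : ∀ p, e p * e p = e p) (horth : ∀ p q, p ≠ q → e p * e q = 0) (hsum : ∑ p, e p = 1) :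
    ∃ m, bm.corner m = m ∧ ∀ q, (D + bm.innerDer m) (e q) = 0 := by
  refine ⟨∑ p, bm.r (D (e p)) (e p), ?_, fun q => ?_⟩
  · simp only [corner, l_sum, r_sum, bm.l_r, ← bm.r_mul, mul_one,
      l_one_of_corner_eq (hD1 _)]
  · have hr : bm.r (∑ p, bm.r (D (e p)) (e p)) (e q) = bm.r (D (e q)) (e q) := by
      rw [r_sum, Finset.sum_eq_single q (fun p _ hpq => by rw [← bm.r_mul, horth p q hpq, zero_r])
        (by simp), ← bm.r_mul, he]
    have hl : bm.l (e q) (∑ p, bm.r (D (e p)) (e p)) = - bm.l (e q) (D (e q)) := by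
      rw [eq_neg_iff_add_eq_zero]
      conv_lhs => enter [2]; rw [← r_one_of_corner_eq (hD1 (e q)), ← hsum, sum_r, l_sum]
      rw [l_sum, ← Finset.sum_add_distrib]
      refine Finset.sum_eq_zero fun p _ => ?_
      rw [bm.l_r, bm.l_r]
      by_cases hpq : p = q
      · rw [hpq, hD.sandwich_map_idempotent htf (he q), add_zero]
      · exact hD.sandwich_map_orthogonal (he p) (he q) (horth p q hpq) (horth q p (Ne.symm hpq))
    have hq := hD.map_mul_self htf (e q)
    rw [he] at hq
    rw [Pi.add_apply, innerDer, hl, hr]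
    conv_lhs => enter [1]; rw [hq]
    abel

end IsJordanDerivation

end RingBimod

namespace RingBimod.IsJordanDerivation

open Matrix

variable {ι R M : Type*} [Fintype ι] [DecidableEq ι] [Ring R] [AddCommGroup M]
  {bm : RingBimod (Matrix ι ι R) M} {D : Matrix ι ι R → M}
  (htf : ∀ m : M, m + m = 0 → m = 0)
include htf

lemma sandwich_map_single_eq_zero (hD : bm.IsJordanDerivation D)
    (hDe : ∀ p, D (single p p 1) = 0) {p q i j : ι} (x : R) (hpq : ¬(i = p ∧ j = q))
    (hqp : ¬(i = q ∧ j = p)) :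
    bm.r (bm.l (single p p 1) (D (single i j x))) (single q q 1) = 0 := by
  by_cases h : p = q
  · subst h
    exact hD.sandwich_map_eq_zero_of_map_eq_zero htf (hDe p) (by simp [single_apply, if_neg hpq])
  · exact hD.sandwich_map_eq_zero_of_orthogonal htf (by simp) (by simp) (by simp [h]) (hDe p)
      (hDe q) (by simp [single_apply, if_neg hpq]) (by simp [single_apply, if_neg hqp])

-- `single i j x = single i j 1 * single j i x * single i j 1`
lemma sandwich_map_single_swap (hD : bm.IsJordanDerivation D) {i j : ι} (hij : i ≠ j) (x : R) :
    bm.r (bm.l (single j j 1) (D (single i j x))) (single i i 1) = 0 := by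
  have h := congrArg (fun m => bm.r (bm.l (single j j 1) m) (single i i 1))
    (hD.map_mul_mul_self htf (single i j 1) (single j i x))
  simpa [bm.l_add, bm.r_add, bm.l_r, ← bm.mul_l, ← bm.r_mul, hij, hij.symm] using h

lemma map_single_eq_sandwich (hD : bm.IsJordanDerivation D) (hD1 : ∀ a, bm.corner (D a) = D a)
    (hDe : ∀ p, D (single p p 1) = 0) (i j : ι) (x : R) :
    D (single i j x) = bm.r (bm.l (single i i 1) (D (single i j x))) (single j j 1) := by
  have hzero : ∀ p q, ¬(i = p ∧ j = q) →
      bm.r (bm.l (single p p 1) (D (single i j x))) (single q q 1) = 0 := by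
    intro p q hne
    by_cases hswap : i = q ∧ j = p
    · obtain ⟨rfl, rfl⟩ := hswap
      exact hD.sandwich_map_single_swap htf (fun h => hne ⟨h, h.symm⟩) x
    · exact hD.sandwich_map_single_eq_zero htf hDe x hne hswap
  conv_lhs => rw [← hD1 (single i j x), corner, ← sum_single_one, sum_l, r_sum]
  simp_rw [sum_r]
  rw [Fintype.sum_eq_single i fun p hp =>
      Finset.sum_eq_zero fun q _ => hzero p q fun h => hp h.1.symm,
    Fintype.sum_eq_single j fun q hq => hzero i q fun h => hq h.2.symm]

section UnitalMatrixUnits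

variable (hD : bm.IsJordanDerivation D) (hD1 : ∀ a, bm.corner (D a) = D a)
  (hDe : ∀ p, D (single p p 1) = 0)
include hD hD1 hDe

lemma l_single_one_map_single (i j : ι) (x : R) :
    bm.l (single i i 1) (D (single i j x)) = D (single i j x) := by
  conv_lhs => rw [hD.map_single_eq_sandwich htf hD1 hDe]
  rw [bm.l_r, ← bm.mul_l, single_mul_single_same, mul_one,
    ← hD.map_single_eq_sandwich htf hD1 hDe]

lemma r_map_single_single_one (i j : ι) (x : R) :
    bm.r (D (single i j x)) (single j j 1) = D (single i j x) := by
  conv_lhs => rw [hD.map_single_eq_sandwich htf hD1 hDe]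
  rw [← bm.r_mul, single_mul_single_same, mul_one, ← hD.map_single_eq_sandwich htf hD1 hDe]

lemma r_l_map_single_single_one (u : Matrix ι ι R) (i j : ι) (x : R) :
    bm.r (bm.l u (D (single i j x))) (single j j 1) = bm.l u (D (single i j x)) := by
  rw [← bm.l_r, hD.r_map_single_single_one htf hD1 hDe]

lemma l_single_map_single_of_ne {j k : ι} (hjk : j ≠ k) (i l : ι) (x y : R) :
    bm.l (single i j x) (D (single k l y)) = 0 := by
  rw [hD.map_single_eq_sandwich htf hD1 hDe, bm.l_r, ← bm.mul_l,
    single_mul_single_of_ne _ _ _ _ hjk, zero_l, r_zero]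

lemma r_map_single_single_of_ne {j k : ι} (hjk : j ≠ k) (i l : ι) (x y : R) :
    bm.r (D (single i j x)) (single k l y) = 0 := by
  rw [hD.map_single_eq_sandwich htf hD1 hDe, ← bm.r_mul, single_mul_single_of_ne _ _ _ _ hjk,
    zero_r]

lemma derivDefect_single_single_of_ne {j k : ι} (hjk : j ≠ k) (i l : ι) (x y : R) :
    bm.derivDefect D (single i j x) (single k l y) = 0 := by
  rw [derivDefect, single_mul_single_of_ne _ _ _ _ hjk, hD.map_zero,
    hD.r_map_single_single_of_ne htf hD1 hDe hjk, hD.l_single_map_single_of_ne htf hD1 hDe hjk,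
    sub_zero, sub_zero]

lemma derivDefect_single_single_same_of_ne {i l : ι} (hli : l ≠ i) (j : ι) (x y : R) :
    bm.derivDefect D (single i j x) (single j l y) = 0 := by
  have h := hD.map_jordan (single i j x) (single j l y)
  rw [single_mul_single_of_ne _ _ _ _ hli, add_zero,
    hD.r_map_single_single_of_ne htf hD1 hDe hli, hD.l_single_map_single_of_ne htf hD1 hDe hli,
    add_zero, add_zero] at h
  rw [derivDefect, h, add_sub_cancel_left, sub_self]

lemma derivDefect_single_single_swap {i j : ι} (hij : i ≠ j) (x y : R) :
    bm.derivDefect D (single i j x) (single j i y) = 0 := by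
  have h := congrArg (fun m => bm.r (bm.l (single i i 1) m) (single i i 1))
    (hD.map_jordan (single i j x) (single j i y))
  simp only [single_mul_single_same, hD.map_add, bm.l_add, bm.r_add, bm.l_r, ← bm.mul_l,
    ← bm.r_mul, mul_one, one_mul, single_mul_single_of_ne _ _ _ _ hij, zero_l,
    add_zero, hD.r_map_single_single_one htf hD1 hDe,
    hD.r_l_map_single_single_one htf hD1 hDe, hD.l_single_one_map_single htf hD1 hDe,
    hD.l_single_map_single_of_ne htf hD1 hDe hij, r_zero] at h
  rw [derivDefect, single_mul_single_same, h]
  abel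

lemma derivDefect_single_diag [Nontrivial ι] (i : ι) (x y : R) :
    bm.derivDefect D (single i i x) (single i i y) = 0 := by
  obtain ⟨j, hj⟩ := exists_ne i
  have h := hD.derivDefect_mul_add htf (single i i x) (single i j y) (single j i 1)
  simp only [single_mul_single_same, mul_one, one_mul] at h
  rwa [hD.derivDefect_single_single_swap htf hD1 hDe hj.symm,
    hD.derivDefect_single_single_of_ne htf hD1 hDe hj,
    hD.derivDefect_single_single_swap htf hD1 hDe hj, l_zero, r_zero, add_zero, add_zero,
    add_zero] at h

lemma derivDefect_single_single [Nontrivial ι] (i j k l : ι) (x y : R) :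
    bm.derivDefect D (single i j x) (single k l y) = 0 := by
  rcases eq_or_ne j k with rfl | hjk
  · rcases eq_or_ne l i with rfl | hli
    · rcases eq_or_ne l j with rfl | hlj
      · exact hD.derivDefect_single_diag htf hD1 hDe l x y
      · exact hD.derivDefect_single_single_swap htf hD1 hDe hlj x y
    · exact hD.derivDefect_single_single_same_of_ne htf hD1 hDe hli j x y
  · exact hD.derivDefect_single_single_of_ne htf hD1 hDe hjk i l x y

lemma derivDefect_eq_zero_of_map_single_one_eq_zero [Nontrivial ι] (a b : Matrix ι ι R) :
    bm.derivDefect D a b = 0 := by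
  induction a using Matrix.induction_on' with
  | h_zero => simp [derivDefect, hD.map_zero]
  | h_add a₁ a₂ h₁ h₂ => rw [derivDefect_add_left hD.map_add, h₁, h₂, add_zero]
  | h_std_basis i j x =>
    induction b using Matrix.induction_on' with
    | h_zero => simp [derivDefect, hD.map_zero]
    | h_add b₁ b₂ h₁ h₂ => rw [derivDefect_add_right hD.map_add, h₁, h₂, add_zero]
    | h_std_basis k l y => exact hD.derivDefect_single_single htf hD1 hDe i j k l x y

end UnitalMatrixUnits

theorem derivDefect_eq_zero_of_matrix [Nontrivial ι] (hD : bm.IsJordanDerivation D)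
    (a b : Matrix ι ι R) : bm.derivDefect D a b = 0 := by
  have hC : bm.IsJordanDerivation (bm.corner ∘ D) := hD.comp_corner
  have hC1 : ∀ a, bm.corner ((bm.corner ∘ D) a) = (bm.corner ∘ D) a :=
    fun a => corner_corner (D a)
  obtain ⟨m, hm, hme⟩ := hC.exists_innerDer_map_idempotent_eq_zero htf hC1
    (fun p => single p p (1 : R)) (by simp) (fun p q h => single_mul_single_of_ne _ _ _ _ h _)
    sum_single_one
  have hC' : ∀ a, bm.corner ((bm.corner ∘ D + bm.innerDer m) a)
      = (bm.corner ∘ D + bm.innerDer m) a := fun a => by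
    rw [Pi.add_apply, corner_add, hC1, corner_innerDer hm]
  calc bm.derivDefect D a b = bm.derivDefect (bm.corner ∘ D) a b :=
        hD.derivDefect_eq_derivDefect_corner htf a b
    _ = bm.derivDefect (bm.corner ∘ D + bm.innerDer m) a b := by
        rw [derivDefect_add, derivDefect_innerDer, add_zero]
    _ = 0 := (hC.add_innerDer m).derivDefect_eq_zero_of_map_single_one_eq_zero htf hC' hme a b

end RingBimod.IsJordanDerivation

theorem stmt11 (R : Type*) [Ring R] (n : ℕ) (hn : 2 ≤ n)
    (M : Type*) [AddCommGroup M] (bm : RingBimod (Matrix (Fin n) (Fin n) R) M)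
    (htf : ∀ m : M, m + m = 0 → m = 0)
    (D : Matrix (Fin n) (Fin n) R → M)
    (hadd : ∀ A B, D (A + B) = D A + D B)
    (hJ : ∀ A B, D (A * B + B * A)
        = bm.r (D A) B + bm.l A (D B) + bm.r (D B) A + bm.l B (D A)) :
    ∀ A B, D (A * B) = bm.r (D A) B + bm.l A (D B) := by
  have : Nontrivial (Fin n) := Fin.nontrivial_iff_two_le.mpr hn
  intro A B
  have h := RingBimod.IsJordanDerivation.derivDefect_eq_zero_of_matrix htf ⟨hadd, hJ⟩ A B
  rwa [RingBimod.derivDefect, sub_sub, sub_eq_zero] at h
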